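/- Let G = (V,E) be a finite simple connected graph of order n ≥ 2. Then β₀(S(G)) ≥ n + β₀*(G). -/

import Mathlib

/-- A finset `S` is independent in `G` if no two of its vertices are adjacent. -/
def IsIndepFinset {V : Type*} (G : SimpleGraph V) (S : Finset V) : Prop :=
  ∀ u ∈ S, ∀ v ∈ S, ¬ G.Adj u v

open Classical in
/-- The neighborhood `N(S)` of a finset `S` in `G`: all vertices adjacent to some vertex of `S`. -/
noncomputable def nbhdSet {V : Type*} [Fintype V] (G : SimpleGraph V) (S : Finset V) : Finset V :=
  Finset.univ.filter fun v => ∃ u ∈ S, G.Adj u v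

/-- The independence number `β₀(G)`: maximum size of an independent set. -/
noncomputable def indepNum {V : Type*} [Fintype V] (G : SimpleGraph V) : ℕ :=
  sSup {k : ℕ | ∃ S : Finset V, IsIndepFinset G S ∧ S.card = k}

/-- A finset `C` is a vertex cover of `G` if it meets every edge. -/
def IsVertexCover {V : Type*} (G : SimpleGraph V) (C : Finset V) : Prop :=
  ∀ u v, G.Adj u v → u ∈ C ∨ v ∈ C

/-- The vertex cover number `α₀(G)`: minimum size of a vertex cover. -/
noncomputable def coverNum {V : Type*} [Fintype V] (G : SimpleGraph V) : ℕ :=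
  sInf {k : ℕ | ∃ C : Finset V, IsVertexCover G C ∧ C.card = k}

/-- `β₀*(G) = max {|S| - |N(S)| : S independent in G}`. -/
noncomputable def betaStar {V : Type*} [Fintype V] (G : SimpleGraph V) : ℤ :=
  sSup {k : ℤ | ∃ S : Finset V,
    IsIndepFinset G S ∧ k = (S.card : ℤ) - ((nbhdSet G S).card : ℤ)}

/-- The splitting graph `S(G)`: vertex set `V ⊔ V'`, with the edges of `G` together with an
edge between the copy `v'` of `v` and `u` for every edge `vu` of `G`. -/
def splittingGraph {V : Type*} (G : SimpleGraph V) : SimpleGraph (V ⊕ V) where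
  Adj x y :=
    match x, y with
    | Sum.inl a, Sum.inl b => G.Adj a b
    | Sum.inl a, Sum.inr b => G.Adj a b
    | Sum.inr a, Sum.inl b => G.Adj a b
    | Sum.inr _, Sum.inr _ => False
  symm := by
    constructor
    rintro (a | a) (b | b) h
    · exact G.adj_symm h
    · exact G.adj_symm h
    · exact G.adj_symm h
    · exact h
  loopless := by
    constructor
    rintro (a | a) h
    · exact G.loopless.irrefl a h
    · exact h

/-! The copies `V'` form an independent set of `S(G)`, and `v'` sees exactly the `G`-neighbours of
`v`. So an independent set `S` of `G` extends to the independent set `S ⊔ (V ∖ N(S))'` of `S(G)`,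
of size `|S| + n - |N(S)|`; maximising over `S` gives `n + β₀*(G) ≤ β₀(S(G))`. -/

section

variable {V : Type*} [Fintype V] {G : SimpleGraph V} {S : Finset V}

theorem IsIndepFinset.card_le_indepNum (hS : IsIndepFinset G S) : S.card ≤ indepNum G :=
  le_csSup ⟨Fintype.card V, by rintro k ⟨T, -, rfl⟩; exact T.card_le_univ⟩ ⟨S, hS, rfl⟩

theorem mem_nbhdSet {v : V} : v ∈ nbhdSet G S ↔ ∃ u ∈ S, G.Adj u v := by
  simp [nbhdSet]

theorem IsIndepFinset.disjSum_compl_nbhdSet [DecidableEq V] (hS : IsIndepFinset G S) :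
    IsIndepFinset (splittingGraph G) (S.disjSum (nbhdSet G S)ᶜ) := by
  rintro (a | a) ha (b | b) hb hab <;>
    simp only [Finset.inl_mem_disjSum, Finset.inr_mem_disjSum, Finset.mem_compl,
      mem_nbhdSet] at ha hb
  · exact hS a ha b hb hab
  · exact hb ⟨a, ha, hab⟩
  · exact ha ⟨b, hb, G.adj_symm hab⟩
  · exact hab

theorem IsIndepFinset.card_sub_card_nbhdSet_le (hS : IsIndepFinset G S) :
    (S.card : ℤ) - (nbhdSet G S).card ≤ indepNum (splittingGraph G) - Fintype.card V := by
  classical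
  have hsplit := hS.disjSum_compl_nbhdSet.card_le_indepNum
  rw [Finset.card_disjSum, Finset.card_compl] at hsplit
  have := (nbhdSet G S).card_le_univ
  omega

end

theorem stmt14_general {V : Type*} [Fintype V] (G : SimpleGraph V) :
    (Fintype.card V : ℤ) + betaStar G ≤ (indepNum (splittingGraph G) : ℤ) := by
  have : betaStar G ≤ indepNum (splittingGraph G) - Fintype.card V := by
    refine csSup_le ⟨0, ∅, fun u hu => absurd hu (Finset.notMem_empty u), by simp [nbhdSet]⟩ ?_
    rintro k ⟨S, hS, rfl⟩
    exact hS.card_sub_card_nbhdSet_le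
  omega

theorem stmt14 {V : Type*} [Fintype V] (G : SimpleGraph V)
    (hconn : G.Connected) (hn : 2 ≤ Fintype.card V) :
    (Fintype.card V : ℤ) + betaStar G ≤ (indepNum (splittingGraph G) : ℤ) :=
  stmt14_general G
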